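/- For every c ∈ ℝ and τ > 0, the travelling wave u(x,t) = 1/2 + (1/π)·arctan((x+ct)/τ) satisfies, for all x ∈ ℝ and t ∈ ℝ, ∂_t u(x,t) + (1/π)·lim_{ε→0⁺} ∫_{{y : |y−x| ≥ ε}} (u(x,t) − u(y,t))/(x−y)² dy = (c/(πτ))·sin²(π·u(x,t)) − (1/(πτ))·sin(π·u(x,t))·cos(π·u(x,t)); that is, u solves the fractional reaction-diffusion equation ∂_t u + (−Δ)^{1/2} u = (c/τ)·g₀(u) + (1/τ)·g₁(u) with g₀(ζ) = (1/π)·sin²(πζ) and g₁(ζ) = −(1/π)·sin(πζ)·cos(πζ). -/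

import Mathlib

/-!
With `ξ = (x + c t) / τ` the wave is `u(x, t) = F(ξ)`, `F` the Cauchy CDF. Since
`π F(ξ) = arctan ξ + π / 2`, one has `g₀(F ξ) = F'(ξ) = 1 / (π (1 + ξ²))` and `g₁(F ξ) = ξ F'(ξ)`,
while `∂ₜ u = (c / τ) F'(ξ)`; so it remains to see that the half-Laplacian of `u` is
`(1 / τ) ξ F'(ξ)`.

For this, the kernel `(arctan X - arctan z) / (X - z)²` has an elementary primitive in `z`
(`arctanKernelPrimitive`) whose only singular part, `-log ((z - X)²) / (2 (1 + X²))`, is even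
about `X`. Hence the truncated integral over `|y - x| ≥ ε` is the difference `π X / (1 + X²)`
of the limits of the primitive at `±∞`, plus a symmetric difference that tends to `0` with `ε`;
composing the primitive with `y ↦ (y + b) / τ` accounts for the factor `1 / τ`.
-/

open Real MeasureTheory Filter Topology Set

theorem integrableOn_Iic_deriv_of_nonneg' {g g' : ℝ → ℝ} {a l : ℝ}
    (hderiv : ∀ x ∈ Iic a, HasDerivAt g (g' x) x) (g'pos : ∀ x ∈ Iio a, 0 ≤ g' x)
    (hg : Tendsto g atBot (𝓝 l)) : IntegrableOn g' (Iic a) := by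
  have hderiv_neg : ∀ x ∈ Ici (-a), HasDerivAt (fun x => g (-x)) (-g' (-x)) x := fun x hx => by
    simpa [Function.comp_def] using
      (hderiv (-x) (neg_le.1 (mem_Ici.1 hx))).scomp x (hasDerivAt_neg' x)
  have hint : IntegrableOn (fun x => g' (-x)) (Ici (-a)) := by
    rw [integrableOn_Ici_iff_integrableOn_Ioi]
    simpa using (integrableOn_Ioi_deriv_of_nonpos' hderiv_neg
      (fun x hx => neg_nonpos.2 (g'pos _ (neg_lt.1 (mem_Ioi.1 hx))))
      (hg.comp tendsto_neg_atTop_atBot)).neg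
  refine (MeasurePreserving.integrableOn_comp_preimage
    (Measure.measurePreserving_neg (volume : Measure ℝ))
    (Homeomorph.neg ℝ).measurableEmbedding).1 ?_
  simpa [Function.comp_def] using hint

theorem setOf_le_abs_sub_eq (x ε : ℝ) : {y : ℝ | ε ≤ |y - x|} = Iic (x - ε) ∪ Ici (x + ε) := by
  ext y
  simp only [mem_ofPred_eq, mem_union, mem_Iic, mem_Ici, le_abs]
  constructor <;> rintro (h | h) <;> first | (left; linarith) | (right; linarith)

theorem integral_pv_eq_of_hasDerivAt {u G : ℝ → ℝ} {x ε l₁ l₂ : ℝ} (hu : Monotone u)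
    (hε : 0 < ε) (hG : ∀ y ≠ x, HasDerivAt G ((u x - u y) / (x - y) ^ 2) y)
    (hbot : Tendsto G atBot (𝓝 l₁)) (htop : Tendsto G atTop (𝓝 l₂)) :
    ∫ y in {y | ε ≤ |y - x|}, (u x - u y) / (x - y) ^ 2 = l₂ - l₁ + (G (x - ε) - G (x + ε)) := by
  have hderivL : ∀ y ∈ Iic (x - ε), HasDerivAt G ((u x - u y) / (x - y) ^ 2) y :=
    fun y hy => hG y (by grind)
  have hderivR : ∀ y ∈ Ici (x + ε), HasDerivAt G ((u x - u y) / (x - y) ^ 2) y :=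
    fun y hy => hG y (by grind)
  -- monotonicity of `u` fixes the sign of the kernel on each side, whence integrability
  have hintL := integrableOn_Iic_deriv_of_nonneg' hderivL
    (fun y hy => div_nonneg (sub_nonneg.2 (hu (by grind))) (sq_nonneg _)) hbot
  have hintR := integrableOn_Ioi_deriv_of_nonpos' hderivR
    (fun y hy => div_nonpos_of_nonpos_of_nonneg (sub_nonpos.2 (hu (by grind)))
      (sq_nonneg _)) htop
  rw [setOf_le_abs_sub_eq, setIntegral_union (Iic_disjoint_Ici.2 (by linarith)) measurableSet_Ici
    hintL ((integrableOn_Ici_iff_integrableOn_Ioi).2 hintR), integral_Ici_eq_integral_Ioi,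
    integral_Iic_of_hasDerivAt_of_tendsto' hderivL hintL hbot,
    integral_Ioi_of_hasDerivAt_of_tendsto' hderivR hintR htop]
  ring

theorem tendsto_integral_pv_of_hasDerivAt {u G : ℝ → ℝ} {x l₁ l₂ : ℝ} (hu : Monotone u)
    (hG : ∀ y ≠ x, HasDerivAt G ((u x - u y) / (x - y) ^ 2) y)
    (hbot : Tendsto G atBot (𝓝 l₁)) (htop : Tendsto G atTop (𝓝 l₂))
    (hsym : Tendsto (fun ε => G (x - ε) - G (x + ε)) (𝓝[>] 0) (𝓝 0)) :
    Tendsto (fun ε => ∫ y in {y | ε ≤ |y - x|}, (u x - u y) / (x - y) ^ 2) (𝓝[>] 0)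
      (𝓝 (l₂ - l₁)) := by
  have h := hsym.const_add (l₂ - l₁)
  rw [add_zero] at h
  refine h.congr' ?_
  filter_upwards [self_mem_nhdsWithin] with ε hε
  exact (integral_pv_eq_of_hasDerivAt hu hε hG hbot htop).symm

noncomputable def arctanKernelPrimitive (X z : ℝ) : ℝ :=
  (arctan z - arctan X) / (z - X) + (log (1 + z ^ 2) - log ((z - X) ^ 2)) / (2 * (1 + X ^ 2))
    + X / (1 + X ^ 2) * arctan z

theorem hasDerivAt_arctanKernelPrimitive {X z : ℝ} (hz : z ≠ X) :
    HasDerivAt (arctanKernelPrimitive X) ((arctan X - arctan z) / (X - z) ^ 2) z := by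
  have hzX : z - X ≠ 0 := sub_ne_zero.2 hz
  have hlin : HasDerivAt (fun z => z - X) 1 z := (hasDerivAt_id z).sub_const X
  have hquad : HasDerivAt (fun z : ℝ => 1 + z ^ 2) (2 * z) z := by
    simpa using (hasDerivAt_pow 2 z).const_add 1
  have hsq : HasDerivAt (fun z => (z - X) ^ 2) (2 * (z - X)) z := by
    simpa using hlin.fun_pow 2
  have hlog := ((hquad.log (by positivity)).sub (hsq.log (pow_ne_zero 2 hzX))).div_const
    (2 * (1 + X ^ 2))
  refine ((((hasDerivAt_arctan z).sub_const (arctan X)).div hlin hzX).add hlog |>.add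
    ((hasDerivAt_arctan z).const_mul (X / (1 + X ^ 2)))).congr_deriv ?_
  rw [show X - z = -(z - X) by ring]
  field_simp
  ring

theorem tendsto_arctanKernelPrimitive_atTop (X : ℝ) :
    Tendsto (arctanKernelPrimitive X) atTop (𝓝 (π * X / (2 * (1 + X ^ 2)))) := by
  have harctan : Tendsto arctan atTop (𝓝 (π / 2)) :=
    tendsto_arctan_atTop.mono_right nhdsWithin_le_nhds
  have hquot : Tendsto (fun z => (arctan z - arctan X) / (z - X)) atTop (𝓝 0) :=
    (harctan.sub_const _).div_atTop (tendsto_atTop_add_const_right _ (-X) tendsto_id)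
  have hinv : Tendsto (fun z : ℝ => z⁻¹) atTop (𝓝 0) := tendsto_inv_atTop_zero
  have hratio : Tendsto (fun z : ℝ => (1 + z ^ 2) / (z - X) ^ 2) atTop (𝓝 1) := by
    have h : Tendsto (fun z : ℝ => (z⁻¹ ^ 2 + 1) / (1 - X * z⁻¹) ^ 2) atTop
        (𝓝 ((0 ^ 2 + 1) / (1 - X * 0) ^ 2)) :=
      ((hinv.pow 2).add_const 1).div ((hinv.const_mul X).const_sub 1 |>.pow 2) (by simp)
    rw [show ((0 : ℝ) ^ 2 + 1) / (1 - X * 0) ^ 2 = 1 by simp] at h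
    refine h.congr' ?_
    filter_upwards [eventually_gt_atTop (max X 0)] with z hz
    have hz0 : z ≠ 0 := by grind
    have hzX : z - X ≠ 0 := by grind
    field_simp
  have hlog : Tendsto (fun z => log (1 + z ^ 2) - log ((z - X) ^ 2)) atTop (𝓝 0) := by
    have h : Tendsto (fun z => log ((1 + z ^ 2) / (z - X) ^ 2)) atTop (𝓝 (log 1)) :=
      (continuousAt_log one_ne_zero).tendsto.comp hratio
    rw [log_one] at h
    refine h.congr' ?_
    filter_upwards [eventually_gt_atTop X] with z hz
    rw [log_div (by positivity) (pow_ne_zero 2 (by grind))]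
  have h := (hquot.add (hlog.div_const (2 * (1 + X ^ 2)))).add
    (harctan.const_mul (X / (1 + X ^ 2)))
  rwa [show 0 + 0 / (2 * (1 + X ^ 2)) + X / (1 + X ^ 2) * (π / 2) = π * X / (2 * (1 + X ^ 2))
    by field_simp; ring] at h

theorem arctanKernelPrimitive_neg_neg (X z : ℝ) :
    arctanKernelPrimitive (-X) (-z) = arctanKernelPrimitive X z := by
  simp only [arctanKernelPrimitive, arctan_neg, neg_sq, show -z - -X = -(z - X) by ring, div_neg]
  ring

theorem tendsto_arctanKernelPrimitive_atBot (X : ℝ) :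
    Tendsto (arctanKernelPrimitive X) atBot (𝓝 (-(π * X / (2 * (1 + X ^ 2))))) := by
  convert (tendsto_arctanKernelPrimitive_atTop (-X)).comp tendsto_neg_atBot_atTop using 2
  · ext z
    simp [arctanKernelPrimitive_neg_neg]
  · rw [neg_sq, mul_neg, neg_div]

theorem tendsto_arctanKernelPrimitive_sub (X : ℝ) :
    Tendsto (fun h => arctanKernelPrimitive X (X - h) - arctanKernelPrimitive X (X + h))
      (𝓝[>] 0) (𝓝 0) := by
  set R : ℝ → ℝ := fun z => log (1 + z ^ 2) / (2 * (1 + X ^ 2)) + X / (1 + X ^ 2) * arctan z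
  have hR : Continuous fun h => R (X - h) - R (X + h) := by
    have : Continuous fun z : ℝ => log (1 + z ^ 2) :=
      Continuous.log (by fun_prop) fun z => by positivity
    fun_prop
  have hright := (hasDerivAt_arctan X).tendsto_slope_zero_right
  have hleft := (hasDerivAt_arctan X).tendsto_slope_zero_left.comp
    (by simpa using tendsto_neg_nhdsGT_neg (a := (0 : ℝ)))
  have h := (hleft.sub hright).add ((hR.tendsto 0).mono_left nhdsWithin_le_nhds)
  simp only [sub_zero, add_zero, sub_self] at h
  refine h.congr' ?_
  filter_upwards [self_mem_nhdsWithin] with h (hh : 0 < h)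
  simp only [smul_eq_mul, Function.comp_apply, inv_neg, ← sub_eq_add_neg, neg_mul,
    arctanKernelPrimitive, sub_sub_cancel_left, even_two, Even.neg_pow, log_pow, Nat.cast_ofNat,
    add_sub_cancel_left, R]
  field_simp
  ring

noncomputable def cauchyCDF (ξ : ℝ) : ℝ := 1 / 2 + 1 / π * arctan ξ

theorem monotone_cauchyCDF : Monotone cauchyCDF := fun _ _ h => by
  unfold cauchyCDF
  gcongr

theorem hasDerivAt_cauchyCDF (ξ : ℝ) : HasDerivAt cauchyCDF (1 / (π * (1 + ξ ^ 2))) ξ := by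
  refine (((hasDerivAt_arctan ξ).const_mul (1 / π)).const_add (1 / 2)).congr_deriv ?_
  field_simp

theorem pi_mul_cauchyCDF (ξ : ℝ) : π * cauchyCDF ξ = arctan ξ + π / 2 := by
  unfold cauchyCDF
  field_simp
  ring

theorem sin_sq_pi_mul_cauchyCDF (ξ : ℝ) : sin (π * cauchyCDF ξ) ^ 2 = 1 / (1 + ξ ^ 2) := by
  rw [pi_mul_cauchyCDF, sin_add_pi_div_two, cos_sq_arctan]

theorem sin_mul_cos_pi_mul_cauchyCDF (ξ : ℝ) :
    sin (π * cauchyCDF ξ) * cos (π * cauchyCDF ξ) = -(ξ / (1 + ξ ^ 2)) := by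
  rw [pi_mul_cauchyCDF, sin_add_pi_div_two, cos_add_pi_div_two, cos_arctan, sin_arctan]
  field_simp
  rw [sq_sqrt (by positivity)]

theorem hasDerivAt_arctanKernelPrimitive_affine {b τ x y : ℝ} (hτ : τ ≠ 0) (hy : y ≠ x) :
    HasDerivAt (fun y => (π * τ)⁻¹ * arctanKernelPrimitive ((x + b) / τ) ((y + b) / τ))
      ((cauchyCDF ((x + b) / τ) - cauchyCDF ((y + b) / τ)) / (x - y) ^ 2) y := by
  have hxy : x - y ≠ 0 := sub_ne_zero.2 hy.symm
  have hz : (y + b) / τ ≠ (x + b) / τ := fun h => hy (by field_simp at h; linarith)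
  have haff : HasDerivAt (fun y => (y + b) / τ) (1 / τ) y := by
    simpa using ((hasDerivAt_id y).add_const b).div_const τ
  refine (((hasDerivAt_arctanKernelPrimitive hz).comp y haff).const_mul _).congr_deriv ?_
  rw [show (x + b) / τ - (y + b) / τ = (x - y) / τ by field_simp; ring]
  unfold cauchyCDF
  field_simp
  ring

theorem tendsto_integral_pv_cauchyCDF (b τ x : ℝ) (hτ : 0 < τ) :
    Tendsto (fun ε => ∫ y in {y | ε ≤ |y - x|},
        (cauchyCDF ((x + b) / τ) - cauchyCDF ((y + b) / τ)) / (x - y) ^ 2)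
      (𝓝[>] 0) (𝓝 ((x + b) / τ / (τ * (1 + ((x + b) / τ) ^ 2)))) := by
  set X := (x + b) / τ
  set G : ℝ → ℝ := fun y => (π * τ)⁻¹ * arctanKernelPrimitive X ((y + b) / τ)
  have hmono : Monotone fun y => cauchyCDF ((y + b) / τ) :=
    monotone_cauchyCDF.comp fun _ _ h => by gcongr
  have haff_atTop : Tendsto (fun y => (y + b) / τ) atTop atTop :=
    (tendsto_atTop_add_const_right _ b tendsto_id).atTop_div_const hτ
  have haff_atBot : Tendsto (fun y => (y + b) / τ) atBot atBot :=
    (tendsto_atBot_add_const_right _ b tendsto_id).atBot_div_const hτ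
  have hscale : Tendsto (fun ε => τ⁻¹ * ε) (𝓝[>] 0) (𝓝[>] 0) :=
    tendsto_iff_comap.2 (comap_mulLeft_nhdsGT_zero (inv_pos.2 hτ)).ge
  have hsym : Tendsto (fun ε => G (x - ε) - G (x + ε)) (𝓝[>] 0) (𝓝 0) := by
    have h := ((tendsto_arctanKernelPrimitive_sub X).comp hscale).const_mul (π * τ)⁻¹
    rw [mul_zero] at h
    refine h.congr fun ε => ?_
    simp only [G, Function.comp_apply, X]
    rw [mul_sub]
    congr 3 <;> ring
  convert tendsto_integral_pv_of_hasDerivAt hmono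
    (fun y hy => hasDerivAt_arctanKernelPrimitive_affine hτ.ne' hy)
    (((tendsto_arctanKernelPrimitive_atBot X).comp haff_atBot).const_mul (π * τ)⁻¹)
    (((tendsto_arctanKernelPrimitive_atTop X).comp haff_atTop).const_mul (π * τ)⁻¹) hsym using 2
  field_simp
  ring

/-- For every `c ∈ ℝ` and `τ > 0`, the travelling wave
`u(x,t) = 1/2 + (1/π)·arctan((x+ct)/τ)` solves the fractional
reaction-diffusion equation `∂_t u + (−Δ)^{1/2} u = (c/τ)·g₀(u) + (1/τ)·g₁(u)`
with `g₀(ζ) = (1/π)·sin²(πζ)` and `g₁(ζ) = −(1/π)·sin(πζ)·cos(πζ)`, where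
`(−Δ)^{1/2}` is given by the principal value singular integral
`(1/π)·lim_{ε→0⁺} ∫_{|y−x| ≥ ε} (u(x,t) − u(y,t))/(x−y)² dy`. -/
theorem travelling_wave_solves_half_laplacian_rde
    (c τ : ℝ) (hτ : 0 < τ)
    (u : ℝ → ℝ → ℝ)
    (hu : ∀ x t : ℝ, u x t = 1 / 2 + (1 / π) * Real.arctan ((x + c * t) / τ)) :
    ∀ x t : ℝ, ∃ ut Au : ℝ,
      HasDerivAt (fun s : ℝ => u x s) ut t ∧
      Tendsto
        (fun ε : ℝ =>
          (1 / π) * ∫ y in {y : ℝ | ε ≤ |y - x|}, (u x t - u y t) / (x - y) ^ 2)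
        (𝓝[>] (0 : ℝ)) (𝓝 Au) ∧
      ut + Au = (c / τ) * ((1 / π) * Real.sin (π * u x t) ^ 2) +
        (1 / τ) * (-(1 / π) * Real.sin (π * u x t) * Real.cos (π * u x t)) := by
  intro x t
  have hu' : ∀ y s, u y s = cauchyCDF ((y + c * s) / τ) := hu
  set ξ := (x + c * t) / τ
  refine ⟨1 / (π * (1 + ξ ^ 2)) * (c / τ), 1 / π * (ξ / (τ * (1 + ξ ^ 2))), ?_, ?_, ?_⟩
  · have hξ : HasDerivAt (fun s => (x + c * s) / τ) (c / τ) t := by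
      simpa using (((hasDerivAt_id t).const_mul c).const_add x).div_const τ
    have h := (hasDerivAt_cauchyCDF ξ).comp t hξ
    rwa [show cauchyCDF ∘ (fun s => (x + c * s) / τ) = fun s => u x s from
      funext fun s => (hu' x s).symm] at h
  · simpa only [hu'] using (tendsto_integral_pv_cauchyCDF (c * t) τ x hτ).const_mul (1 / π)
  · have hux : u x t = cauchyCDF ξ := hu' x t
    rw [hux, mul_assoc (-(1 / π)), sin_sq_pi_mul_cauchyCDF, sin_mul_cos_pi_mul_cauchyCDF]
    field_simp
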